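/- arXiv:2411.03255 — 4 statements merged into one kernel-verified Lean document; each statement's English description precedes it below -/
import Mathlib

section
/- Let n be a positive integer, let H be an n×n Hermitian complex matrix, and let R be any n×n complex matrix. Then the following are equivalent: (1) for every eigenvector ψ of H (i.e., every nonzero ψ ∈ ℂⁿ with Hψ = λψ for some λ), the inner product ⟨ψ, Rψ⟩ equals 0; (2) there exists an n×n complex matrix M such that HM − MH = R. -/
/-!
Write `H = U D U*` with `U` unitary and `D = diag(d)` real. In the eigenbasis the commutator
`D M' - M' D` has entries `(d j - d k) M' j k`, so the commutators are exactly the matrices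
vanishing on the blocks `d j = d k`. For `R' = U* R U` these entries are `⟨u j, R u k⟩` with
`u j, u k` in a common eigenspace of `H`, and they vanish by polarization of `⟨ψ, R ψ⟩ = 0` on
that eigenspace. Conversely, `⟨ψ, (H M - M H) ψ⟩ = (conj μ - μ) ⟨ψ, M ψ⟩ = 0` since `μ` is real.
-/

open Matrix Module.End

variable {n 𝕜 : Type*} [Fintype n] [RCLike 𝕜]

lemma Matrix.IsHermitian.star_eq_of_mulVec_eq_smul [DecidableEq n] {H : Matrix n n 𝕜}
    (hH : H.IsHermitian) {ψ : n → 𝕜} (hψ : ψ ≠ 0) {μ : 𝕜} (h : H *ᵥ ψ = μ • ψ) :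
    star μ = μ :=
  (isSymmetric_toEuclideanLin_iff.mpr hH).conj_eigenvalue_eq_self <|
    hasEigenvalue_of_hasEigenvector (x := WithLp.toLp 2 ψ)
      ⟨mem_eigenspace_iff.mpr (by simp [toLpLin_apply, h]), by simpa using hψ⟩

lemma Matrix.IsHermitian.star_dotProduct_commutator_mulVec_eq_zero [DecidableEq n]
    {H : Matrix n n 𝕜} (hH : H.IsHermitian) (M : Matrix n n 𝕜) {ψ : n → 𝕜} (hψ : ψ ≠ 0)
    {μ : 𝕜} (h : H *ᵥ ψ = μ • ψ) : star ψ ⬝ᵥ (H * M - M * H) *ᵥ ψ = 0 := by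
  have hrow : star ψ ᵥ* H = μ • star ψ := by
    rw [← hH.eq, ← star_mulVec, h, star_smul, hH.star_eq_of_mulVec_eq_smul hψ h]
  rw [sub_mulVec, ← mulVec_mulVec, ← mulVec_mulVec, h, dotProduct_sub, dotProduct_mulVec, hrow,
    mulVec_smul, dotProduct_smul, smul_dotProduct, sub_self]

lemma Matrix.IsHermitian.eigenvectorBasis_mem_eigenspace [DecidableEq n] {H : Matrix n n 𝕜}
    (hH : H.IsHermitian) (j : n) :
    ⇑(hH.eigenvectorBasis j) ∈ eigenspace (toLin' H) (hH.eigenvalues j : 𝕜) := by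
  rw [mem_eigenspace_iff, toLin'_apply, hH.mulVec_eigenvectorBasis,
    RCLike.real_smul_eq_coe_smul (K := 𝕜)]

lemma star_dotProduct_mulVec_eq_zero_of_forall_mem {p : Submodule ℂ (n → ℂ)}
    {A : Matrix n n ℂ} (hA : ∀ v ∈ p, star v ⬝ᵥ A *ᵥ v = 0) {v w : n → ℂ} (hv : v ∈ p)
    (hw : w ∈ p) : star v ⬝ᵥ A *ᵥ w = 0 := by
  have h₁ := hA (v + w) (p.add_mem hv hw)
  have h₂ := hA (v + Complex.I • w) (p.add_mem hv (p.smul_mem _ hw))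
  simp only [star_add, star_smul, mulVec_add, mulVec_smul, dotProduct_add, add_dotProduct,
    dotProduct_smul, smul_dotProduct, hA v hv, hA w hw, smul_eq_mul, RCLike.star_def,
    Complex.conj_I] at h₁ h₂
  linear_combination (1 / 2 : ℂ) * h₁ - (Complex.I / 2) * h₂ +
    ((star v ⬝ᵥ A *ᵥ w - star w ⬝ᵥ A *ᵥ v) / 2) * Complex.I_sq

lemma Matrix.star_mul_mul_apply (U A : Matrix n n 𝕜) (j k : n) :
    (star U * A * U) j k = star (Uᵀ j) ⬝ᵥ A *ᵥ Uᵀ k := by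
  rw [mul_assoc, mul_apply]
  simp [dotProduct, mulVec, mul_apply, Finset.mul_sum]

lemma exists_diagonal_mul_sub_mul_diagonal_eq {K : Type*} [Field K] [DecidableEq n]
    (d : n → K) (R : Matrix n n K) (hR : ∀ j k, d j = d k → R j k = 0) :
    ∃ M, diagonal d * M - M * diagonal d = R := by
  refine ⟨of fun j k => R j k / (d j - d k), ?_⟩
  ext j k
  rw [Matrix.sub_apply, diagonal_mul, mul_diagonal, of_apply]
  rcases eq_or_ne (d j) (d k) with h | h
  · simp [h, hR j k h]
  · field_simp [sub_ne_zero.mpr h]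

theorem orthogonality_iff_commutator_general (n : ℕ)
    (H : Matrix (Fin n) (Fin n) ℂ) (hH : H.IsHermitian)
    (R : Matrix (Fin n) (Fin n) ℂ) :
    (∀ ψ : Fin n → ℂ, ψ ≠ 0 → (∃ μ : ℂ, H.mulVec ψ = μ • ψ) →
        star ψ ⬝ᵥ R.mulVec ψ = 0) ↔
      ∃ M : Matrix (Fin n) (Fin n) ℂ, H * M - M * H = R := by
  refine ⟨fun hR => ?_, ?_⟩
  · set φ := Unitary.conjStarAlgAut ℂ _ hH.eigenvectorUnitary
    have hR_eigenspace (μ : ℂ) : ∀ v ∈ eigenspace (toLin' H) μ, star v ⬝ᵥ R *ᵥ v = 0 := by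
      intro v hv
      rcases eq_or_ne v 0 with rfl | hv0
      · simp
      · exact hR v hv0 ⟨μ, by simpa using mem_eigenspace_iff.mp hv⟩
    obtain ⟨M, hM⟩ := exists_diagonal_mul_sub_mul_diagonal_eq (RCLike.ofReal ∘ hH.eigenvalues)
      (φ.symm R) fun j k hjk => by
        rw [Function.comp_apply, Function.comp_apply] at hjk
        rw [Unitary.conjStarAlgAut_symm_apply, star_mul_mul_apply,
          hH.eigenvectorUnitary_transpose_apply, hH.eigenvectorUnitary_transpose_apply]
        exact star_dotProduct_mulVec_eq_zero_of_forall_mem (hR_eigenspace _)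
          (hH.eigenvectorBasis_mem_eigenspace j) (hjk ▸ hH.eigenvectorBasis_mem_eigenspace k)
    refine ⟨φ M, ?_⟩
    rw [hH.spectral_theorem, ← map_mul, ← map_mul, ← map_sub, hM, φ.apply_symm_apply]
  · rintro ⟨M, rfl⟩ ψ hψ ⟨μ, hμ⟩
    exact hH.star_dotProduct_commutator_mulVec_eq_zero M hψ hμ

/-- The orthogonality condition `⟨ψ, Rψ⟩ = 0` for every eigenvector `ψ` of a Hermitian `H`
holds if and only if `R` is a commutator `R = HM − MH` for some matrix `M`. -/
theorem orthogonality_iff_commutator (n : ℕ) (hn : 0 < n)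
    (H : Matrix (Fin n) (Fin n) ℂ) (hH : H.IsHermitian)
    (R : Matrix (Fin n) (Fin n) ℂ) :
    (∀ ψ : Fin n → ℂ, ψ ≠ 0 → (∃ μ : ℂ, H.mulVec ψ = μ • ψ) →
        star ψ ⬝ᵥ R.mulVec ψ = 0) ↔
      ∃ M : Matrix (Fin n) (Fin n) ℂ, H * M - M * H = R :=
  orthogonality_iff_commutator_general n H hH R
end

section
/- Let n be a positive integer, let H be an n×n Hermitian complex matrix, and let R be an n×n complex matrix. If ⟨ψ, Rψ⟩ = 0 for every eigenvector ψ of H, then Tr(Hᵏ · R) = 0 for every natural number k ≥ 0 (in particular Tr(R) = 0). -/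
open Matrix

theorem Matrix.trace_conjStarAlgAut {n α : Type*} [Fintype n] [DecidableEq n] [CommRing α]
    [StarRing α] (u : unitaryGroup n α) (M : Matrix n n α) :
    (Unitary.conjStarAlgAut α _ u M).trace = M.trace := by
  rw [Unitary.conjStarAlgAut_apply, trace_mul_cycle, Unitary.coe_star_mul_self, one_mul]

theorem Matrix.star_mul_mul_apply_self {n α : Type*} [Fintype n] [NonUnitalSemiring α] [Star α]
    (A M : Matrix n n α) (i : n) :
    (star A * M * A) i i = star (Aᵀ i) ⬝ᵥ M *ᵥ Aᵀ i := by
  rw [Matrix.mul_assoc, mul_apply']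
  rfl

theorem Matrix.IsHermitian.trace_pow_mul {n 𝕜 : Type*} [Fintype n] [DecidableEq n] [RCLike 𝕜]
    {H : Matrix n n 𝕜} (hH : H.IsHermitian) (R : Matrix n n 𝕜) (k : ℕ) :
    (H ^ k * R).trace = ∑ i, (hH.eigenvalues i : 𝕜) ^ k *
      (star ⇑(hH.eigenvectorBasis i) ⬝ᵥ R *ᵥ ⇑(hH.eigenvectorBasis i)) := by
  rw [← trace_conjStarAlgAut (star hH.eigenvectorUnitary), map_mul, map_pow,
    hH.conjStarAlgAut_star_eigenvectorUnitary, diagonal_pow, trace]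
  refine Finset.sum_congr rfl fun i _ => ?_
  rw [diag_apply, diagonal_mul, Unitary.conjStarAlgAut_star_apply, star_mul_mul_apply_self,
    eigenvectorUnitary_transpose_apply, Pi.pow_apply, Function.comp_apply]

theorem orthogonality_implies_trace_vanish_general (n : ℕ)
    (H : Matrix (Fin n) (Fin n) ℂ) (hH : H.IsHermitian)
    (R : Matrix (Fin n) (Fin n) ℂ)
    (horth : ∀ ψ : Fin n → ℂ, ψ ≠ 0 → (∃ μ : ℂ, H.mulVec ψ = μ • ψ) →
      star ψ ⬝ᵥ R.mulVec ψ = 0) :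
    (∀ k : ℕ, (H ^ k * R).trace = 0) ∧ R.trace = 0 := by
  have hk (k : ℕ) : (H ^ k * R).trace = 0 := by
    rw [hH.trace_pow_mul]
    refine Finset.sum_eq_zero fun i _ => ?_
    have hne : ⇑(hH.eigenvectorBasis i) ≠ 0 :=
      (WithLp.ofLp_eq_zero 2).ne.2 (hH.eigenvectorBasis.orthonormal.ne_zero i)
    have heig : H *ᵥ ⇑(hH.eigenvectorBasis i) =
        (hH.eigenvalues i : ℂ) • ⇑(hH.eigenvectorBasis i) := by
      rw [hH.mulVec_eigenvectorBasis, Complex.coe_smul]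
    rw [horth _ hne ⟨_, heig⟩, mul_zero]
  exact ⟨hk, by simpa using hk 0⟩

/-- If `⟨ψ, Rψ⟩ = 0` for every eigenvector `ψ` of the Hermitian matrix `H`,
then `Tr(Hᵏ R) = 0` for every `k ≥ 0` (in particular `Tr R = 0`). -/
theorem orthogonality_implies_trace_vanish (n : ℕ) (hn : 0 < n)
    (H : Matrix (Fin n) (Fin n) ℂ) (hH : H.IsHermitian)
    (R : Matrix (Fin n) (Fin n) ℂ)
    (horth : ∀ ψ : Fin n → ℂ, ψ ≠ 0 → (∃ μ : ℂ, H.mulVec ψ = μ • ψ) →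
      star ψ ⬝ᵥ R.mulVec ψ = 0) :
    (∀ k : ℕ, (H ^ k * R).trace = 0) ∧ R.trace = 0 :=
  orthogonality_implies_trace_vanish_general n H hH R horth
end

section
/- Let n be a positive integer, let H and R be n×n Hermitian complex matrices, let h ≥ 0, t ≥ 0, and ε > 0. Let (ψ_j)_{j=1}^n be an orthonormal basis of ℂⁿ of eigenvectors of H with eigenvalues λ_j, and let (ψ′_k)_{k=1}^n be an orthonormal basis of eigenvectors of H + hR with eigenvalues λ′_k. Set b_{jk} = ⟨ψ_j, R ψ′_k⟩, so that R = Σ_{j,k} b_{jk} ψ_j (ψ′_k)†. For ε′ ≥ 0 define Δ(ε′) = max( ‖Σ_{(j,k): |λ_j − λ′_k| < ε′} b_{jk} ψ_j(ψ′_k)†‖ , ‖Σ_{(j,k): |λ_j − λ′_k| < ε′} sgn(λ_j − λ′_k)·b_{jk} ψ_j(ψ′_k)†‖ ), and define 𝓡(ε) = Σ_{(j,k): |λ_j − λ′_k| ≥ ε} (b_{jk}/(λ_j − λ′_k)) ψ_j(ψ′_k)†. Then ‖exp(−i(H+hR)t) − exp(−iHt)‖ ≤ (1 + tε)·h·( sup_{0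 ≤ ε′ ≤ ε} Δ(ε′) )·t + 2·h·‖𝓡(ε)‖. -/
/-!
Write `U s = exp (-i s H)` and `V s = exp (-i s H')` with `H' = H + hR`; both are unitary, and
`U t - V t = ∫₀ᵗ U (t - s) (i h R) V s ds` (Duhamel). In the mixed eigenbases, `R` splits into its
near-resonant part `N` (the pairs with `|λⱼ - λ'ₖ| < ε`), which contributes at most
`h ‖N‖ t ≤ h Δ(ε) t`, and a far part which is exactly the Sylvester commutator `H 𝓡 - 𝓡 H'`.
For a commutator the integrand is an exact derivative, so the far part only contributes a
boundary term `-h (U t 𝓡 - 𝓡 V t)`, of norm at most `2 h ‖𝓡‖`.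
-/

open scoped Matrix.Norms.L2Operator
open NormedSpace Matrix Finset

section Sylvester

variable {𝔸 : Type*} [NormedRing 𝔸] [NormedAlgebra ℝ 𝔸] [CompleteSpace 𝔸]

/-- The integrand is minus the derivative of `s ↦ exp ((t - s) • X) * A * exp (s • Y)`. -/
theorem integral_exp_smul_mul_sub_mul_mul_exp_smul (X Y A : 𝔸) (t : ℝ) :
    ∫ s in (0 : ℝ)..t, exp ((t - s) • X) * (X * A - A * Y) * exp (s • Y) =
      exp (t • X) * A - A * exp (t • Y) := by
  have hderiv : ∀ s : ℝ, HasDerivAt (fun u : ℝ => exp ((t - u) • X) * A * exp (u • Y))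
      (-(exp ((t - s) • X) * (X * A - A * Y) * exp (s • Y))) s := by
    intro s
    have hX := (hasDerivAt_exp_smul_const (𝕂 := ℝ) X (t - s)).scomp s
      ((hasDerivAt_id s).const_sub t)
    have hY := hasDerivAt_exp_smul_const' (𝕂 := ℝ) Y s
    refine ((hX.mul_const A).mul hY).congr_deriv ?_
    simp only [Function.comp_apply, neg_one_smul]
    noncomm_ring
  have hcont : Continuous fun s : ℝ => exp ((t - s) • X) * (X * A - A * Y) * exp (s • Y) :=
    have hexp (Z : 𝔸) : Continuous fun s : ℝ => exp (s • Z) :=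
      (differentiable_exp_smul_const ℝ Z).continuous
    (((hexp X).comp (continuous_const.sub continuous_id)).mul continuous_const).mul (hexp Y)
  rw [← neg_neg (∫ s in (0 : ℝ)..t, _), ← intervalIntegral.integral_neg,
    intervalIntegral.integral_eq_sub_of_hasDerivAt (fun s _ => hderiv s)
      (hcont.neg.intervalIntegrable 0 t)]
  simp

theorem norm_exp_smul_sub_exp_smul_le {X Y A C : 𝔸}
    (hX : ∀ s : ℝ, 0 ≤ s → ‖exp (s • X)‖ ≤ 1) (hY : ∀ s : ℝ, 0 ≤ s → ‖exp (s • Y)‖ ≤ 1)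
    (hXY : X - Y = C + (X * A - A * Y)) {t : ℝ} (ht : 0 ≤ t) :
    ‖exp (t • X) - exp (t • Y)‖ ≤ ‖C‖ * t + 2 * ‖A‖ := by
  -- Duhamel's formula is the case `A = 1` of the previous identity; using `1 - A` instead
  -- separates the commutator part from `C`.
  have hC : X * (1 - A) - (1 - A) * Y = C := by
    rw [mul_sub, sub_mul, mul_one, one_mul, ← sub_eq_iff_eq_add.mpr hXY]
    abel
  have hsplit : exp (t • X) - exp (t • Y) =
      (∫ s in (0 : ℝ)..t, exp ((t - s) • X) * C * exp (s • Y)) +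
        (exp (t • X) * A - A * exp (t • Y)) := by
    rw [← hC, integral_exp_smul_mul_sub_mul_mul_exp_smul]
    noncomm_ring
  have hint : ‖∫ s in (0 : ℝ)..t, exp ((t - s) • X) * C * exp (s • Y)‖ ≤ ‖C‖ * t := by
    have := intervalIntegral.norm_integral_le_of_norm_le_const (a := 0) (b := t)
      (C := ‖C‖) (f := fun s => exp ((t - s) • X) * C * exp (s • Y)) ?_
    · rwa [sub_zero, abs_of_nonneg ht] at this
    rintro s ⟨hs0, hst⟩
    rw [min_eq_left ht] at hs0
    rw [max_eq_right ht] at hst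
    calc ‖exp ((t - s) • X) * C * exp (s • Y)‖
        ≤ ‖exp ((t - s) • X)‖ * ‖C‖ * ‖exp (s • Y)‖ := norm_mul₃_le
      _ ≤ 1 * ‖C‖ * 1 := by gcongr; exacts [hX _ (sub_nonneg.mpr hst), hY _ hs0.le]
      _ = ‖C‖ := by ring
  have hbdry : ‖exp (t • X) * A - A * exp (t • Y)‖ ≤ 2 * ‖A‖ :=
    calc ‖exp (t • X) * A - A * exp (t • Y)‖
        ≤ ‖exp (t • X)‖ * ‖A‖ + ‖A‖ * ‖exp (t • Y)‖ :=
          (norm_sub_le _ _).trans (add_le_add (norm_mul_le _ _) (norm_mul_le _ _))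
      _ ≤ 1 * ‖A‖ + ‖A‖ * 1 := by gcongr; exacts [hX t ht, hY t ht]
      _ = 2 * ‖A‖ := by ring
  rw [hsplit]
  exact (norm_add_le _ _).trans (add_le_add hint hbdry)

end Sylvester

theorem CStarRing.norm_le_one_of_mem_unitary {E : Type*} [NormedRing E] [StarRing E]
    [CStarRing E] {U : E} (hU : U ∈ unitary E) : ‖U‖ ≤ 1 := by
  nontriviality E
  exact (CStarRing.norm_of_mem_unitary hU).le

theorem IsSelfAdjoint.norm_exp_neg_I_mul_smul_le_one {A : Type*} [NormedRing A]
    [NormedAlgebra ℂ A] [StarRing A] [ContinuousStar A] [CompleteSpace A] [StarModule ℂ A]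
    [CStarRing A] {a : A} (ha : IsSelfAdjoint a) (s : ℝ) :
    ‖NormedSpace.exp ((-(Complex.I * s)) • a)‖ ≤ 1 := by
  let +nondep : NormedAlgebra ℚ A := .restrictScalars ℚ ℂ A
  refine CStarRing.norm_le_one_of_mem_unitary
    (exp_mem_unitary_of_mem_skewAdjoint (IsSelfAdjoint.smul_mem_skewAdjoint ?_ ha))
  simp [skewAdjoint.mem_iff, Complex.conj_ofReal]

theorem real_smul_neg_I_smul {E : Type*} [AddCommGroup E] [Module ℂ E] [Module ℝ E]
    [IsScalarTower ℝ ℂ E] (s : ℝ) (x : E) : s • (-Complex.I) • x = (-(Complex.I * s)) • x := by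
  rw [← smul_one_smul ℂ s, smul_smul, Complex.real_smul, mul_one, mul_comm, neg_mul]

theorem norm_sum_sum_ite_le {ι κ E : Type*} [Fintype ι] [Fintype κ] [SeminormedAddCommGroup E]
    (p : ι → κ → Prop) [∀ j k, Decidable (p j k)] (f : ι → κ → E) :
    ‖∑ j, ∑ k, if p j k then f j k else 0‖ ≤ ∑ j, ∑ k, ‖f j k‖ :=
  (norm_sum_le _ _).trans <| sum_le_sum fun j _ => (norm_sum_le _ _).trans <|
    sum_le_sum fun k _ => by split_ifs <;> simp

namespace Matrix

variable {m ι κ 𝕜 : Type*} [Fintype m] [Fintype ι] [Fintype κ]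

theorem mul_vecMulVec_of_mulVec_eq_smul [CommRing 𝕜] {H : Matrix m m 𝕜} {u : m → 𝕜} {μ : 𝕜}
    (hu : H *ᵥ u = μ • u) (v : m → 𝕜) : H * vecMulVec u v = μ • vecMulVec u v := by
  rw [mul_vecMulVec, hu, smul_vecMulVec]

theorem vecMulVec_star_mul_of_mulVec_eq_smul [CommRing 𝕜] [StarRing 𝕜] {H : Matrix m m 𝕜}
    (hH : H.IsHermitian) {w : m → 𝕜} {μ : 𝕜} (hμ : star μ = μ) (hw : H *ᵥ w = μ • w)
    (u : m → 𝕜) : vecMulVec u (star w) * H = μ • vecMulVec u (star w) := by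
  rw [vecMulVec_mul, ← hH.eq, ← star_mulVec, hw, star_smul, hμ, vecMulVec_smul]

theorem mul_sum_sub_sum_mul_of_mulVec_eq_smul [CommRing 𝕜] [StarRing 𝕜] {H H' : Matrix m m 𝕜}
    (hH' : H'.IsHermitian) {ψ : ι → m → 𝕜} {ψ' : κ → m → 𝕜} {μ : ι → 𝕜} {μ' : κ → 𝕜}
    (hψ : ∀ j, H *ᵥ ψ j = μ j • ψ j) (hψ' : ∀ k, H' *ᵥ ψ' k = μ' k • ψ' k)
    (hμ' : ∀ k, star (μ' k) = μ' k) (c : ι → κ → 𝕜) :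
    H * (∑ j, ∑ k, c j k • vecMulVec (ψ j) (star (ψ' k))) -
        (∑ j, ∑ k, c j k • vecMulVec (ψ j) (star (ψ' k))) * H' =
      ∑ j, ∑ k, ((μ j - μ' k) * c j k) • vecMulVec (ψ j) (star (ψ' k)) := by
  simp_rw [mul_sum, sum_mul, mul_smul_comm, smul_mul_assoc, mul_vecMulVec_of_mulVec_eq_smul (hψ _),
    vecMulVec_star_mul_of_mulVec_eq_smul hH' (hμ' _) (hψ' _), ← sum_sub_distrib, smul_smul,
    ← sub_smul, ← mul_sub, mul_comm (c _ _)]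

section Resonance

variable (lam : ι → ℝ) (lam' : κ → ℝ) (ψ : ι → m → ℂ) (ψ' : κ → m → ℂ) (b : ι → κ → ℂ)
  (ε : ℝ)

/-- `nearResonantPart lam lam' ψ ψ' b ε` is the first matrix in the paper's `Δ(ε)`, and
`gapWeightedPart lam lam' ψ ψ' b ε` is its `𝓡(ε)`. -/
noncomputable def nearResonantPart : Matrix m m ℂ :=
  ∑ j, ∑ k, if |lam j - lam' k| < ε then b j k • vecMulVec (ψ j) (star (ψ' k)) else 0

noncomputable def gapWeightedPart : Matrix m m ℂ :=
  ∑ j, ∑ k, if ε ≤ |lam j - lam' k| then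
    (b j k / ((lam j : ℂ) - lam' k)) • vecMulVec (ψ j) (star (ψ' k)) else 0

variable {lam lam' ψ ψ' ε}

theorem sum_smul_vecMulVec_eq_nearResonantPart_add {H H' : Matrix m m ℂ} (hε : 0 < ε)
    (hH' : H'.IsHermitian) (hψ : ∀ j, H *ᵥ ψ j = (lam j : ℂ) • ψ j)
    (hψ' : ∀ k, H' *ᵥ ψ' k = (lam' k : ℂ) • ψ' k) :
    ∑ j, ∑ k, b j k • vecMulVec (ψ j) (star (ψ' k)) =
      nearResonantPart lam lam' ψ ψ' b ε +
        (H * gapWeightedPart lam lam' ψ ψ' b ε - gapWeightedPart lam lam' ψ ψ' b ε * H') := by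
  have hgap : ∀ j k, ε ≤ |lam j - lam' k| → (lam j : ℂ) - lam' k ≠ 0 := fun j k hjk => by
    rw [← Complex.ofReal_sub, Complex.ofReal_ne_zero]
    rintro h0
    rw [h0, abs_zero] at hjk
    linarith
  have hgapPart : gapWeightedPart lam lam' ψ ψ' b ε = ∑ j, ∑ k,
      (if ε ≤ |lam j - lam' k| then b j k / ((lam j : ℂ) - lam' k) else 0) •
        vecMulVec (ψ j) (star (ψ' k)) := by
    simp only [gapWeightedPart, ite_smul, zero_smul]
  rw [hgapPart, mul_sum_sub_sum_mul_of_mulVec_eq_smul hH' hψ hψ' (fun k => Complex.conj_ofReal _),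
    nearResonantPart, ← sum_add_distrib]
  refine sum_congr rfl fun j _ => ?_
  rw [← sum_add_distrib]
  refine sum_congr rfl fun k _ => ?_
  split_ifs with hnear hfar hfar
  · exact absurd hfar (not_le.mpr hnear)
  · simp
  · rw [mul_div_cancel₀ _ (hgap j k hfar), zero_add]
  · exact absurd (not_lt.mp hnear) hfar

end Resonance

variable [DecidableEq m]

theorem sum_vecMulVec_star_self_eq_one [Field 𝕜] [StarRing 𝕜] {ψ : m → m → 𝕜}
    (hψ : ∀ j k, star (ψ j) ⬝ᵥ ψ k = if j = k then 1 else 0) :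
    ∑ j, vecMulVec (ψ j) (star (ψ j)) = 1 := by
  set P : Matrix m m 𝕜 := of fun x j => ψ j x
  have hPP : Pᴴ * P = 1 := by
    ext j k
    simpa [P, mul_apply, dotProduct, one_apply] using hψ j k
  calc ∑ j, vecMulVec (ψ j) (star (ψ j)) = P * Pᴴ := by
        ext x y
        simp [P, sum_apply, vecMulVec_apply, mul_apply]
    _ = 1 := mul_eq_one_comm.mp hPP

theorem eq_sum_sum_smul_vecMulVec [CommRing 𝕜] [StarRing 𝕜] {ψ : ι → m → 𝕜} {ψ' : κ → m → 𝕜}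
    (hψ : ∑ j, vecMulVec (ψ j) (star (ψ j)) = 1) (hψ' : ∑ k, vecMulVec (ψ' k) (star (ψ' k)) = 1)
    (R : Matrix m m 𝕜) :
    R = ∑ j, ∑ k, (star (ψ j) ⬝ᵥ R *ᵥ ψ' k) • vecMulVec (ψ j) (star (ψ' k)) := by
  calc R = (∑ j, vecMulVec (ψ j) (star (ψ j))) * R * ∑ k, vecMulVec (ψ' k) (star (ψ' k)) := by
        rw [hψ, hψ', one_mul, mul_one]
    _ = _ := by
        simp_rw [sum_mul, mul_sum, vecMulVec_mul, vecMul_vecMulVec, vecMulVec_smul,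
          dotProduct_mulVec]

theorem IsHermitian.norm_exp_sub_exp_le {H H' N F : Matrix m m ℂ} (hH : H.IsHermitian)
    (hH' : H'.IsHermitian) (hsplit : H' - H = N + (H * F - F * H')) {t : ℝ} (ht : 0 ≤ t) :
    ‖NormedSpace.exp ((-(Complex.I * t)) • H') - NormedSpace.exp ((-(Complex.I * t)) • H)‖ ≤
      ‖N‖ * t + 2 * ‖F‖ := by
  have hcontr : ∀ {M : Matrix m m ℂ}, M.IsHermitian →
      ∀ s : ℝ, 0 ≤ s → ‖NormedSpace.exp (s • (-Complex.I) • M)‖ ≤ 1 := fun hM s _ => by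
    rw [real_smul_neg_I_smul]
    exact hM.isSelfAdjoint.norm_exp_neg_I_mul_smul_le_one s
  have hXY : (-Complex.I) • H - (-Complex.I) • H' =
      Complex.I • N + ((-Complex.I) • H * (-F) - (-F) * ((-Complex.I) • H')) := by
    rw [← smul_sub, ← neg_sub, hsplit]
    simp only [smul_neg, neg_smul, neg_neg, smul_add, smul_sub, mul_neg, neg_mul, smul_mul_assoc,
      mul_smul_comm]
    abel
  have key := norm_exp_smul_sub_exp_smul_le (hcontr hH) (hcontr hH') hXY ht
  rwa [real_smul_neg_I_smul, real_smul_neg_I_smul, norm_sub_rev, norm_smul, Complex.norm_I,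
    one_mul, norm_neg] at key

end Matrix

theorem tight_general_interference_bound_general (n : ℕ)
    (H R : Matrix (Fin n) (Fin n) ℂ) (hH : H.IsHermitian) (hR : R.IsHermitian)
    (h t ε : ℝ) (hh : 0 ≤ h) (ht : 0 ≤ t) (hε : 0 < ε)
    (lam lam' : Fin n → ℝ) (ψ ψ' : Fin n → (Fin n → ℂ))
    (hon : ∀ j k, star (ψ j) ⬝ᵥ ψ k = if j = k then 1 else 0)
    (hon' : ∀ j k, star (ψ' j) ⬝ᵥ ψ' k = if j = k then 1 else 0)
    (heig : ∀ j, H.mulVec (ψ j) = (Complex.ofReal (lam j)) • ψ j)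
    (heig' : ∀ k, (H + (h : ℂ) • R).mulVec (ψ' k) = (Complex.ofReal (lam' k)) • ψ' k)
    (b : Fin n → Fin n → ℂ) (hb : ∀ j k, b j k = star (ψ j) ⬝ᵥ R.mulVec (ψ' k))
    (Δ : ℝ → ℝ)
    (hΔ : ∀ ε' : ℝ, Δ ε' =
      max ‖∑ j, ∑ k, if |lam j - lam' k| < ε' then
              b j k • Matrix.vecMulVec (ψ j) (star (ψ' k)) else 0‖
          ‖∑ j, ∑ k, if |lam j - lam' k| < ε' then
              ((Real.sign (lam j - lam' k) : ℂ) * b j k) •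
                Matrix.vecMulVec (ψ j) (star (ψ' k)) else 0‖)
    (𝓡 : Matrix (Fin n) (Fin n) ℂ)
    (h𝓡 : 𝓡 = ∑ j, ∑ k, if ε ≤ |lam j - lam' k| then
        (b j k / (Complex.ofReal (lam j) - Complex.ofReal (lam' k))) •
          Matrix.vecMulVec (ψ j) (star (ψ' k)) else 0) :
    ‖exp ((-(Complex.I * t)) • (H + (h : ℂ) • R)) - exp ((-(Complex.I * t)) • H)‖ ≤
      (1 + t * ε) * h * sSup (Δ '' Set.Icc 0 ε) * t + 2 * h * ‖𝓡‖ := by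
  set N := nearResonantPart lam lam' ψ ψ' b ε
  have hΔ_bdd : BddAbove (Δ '' Set.Icc 0 ε) := ⟨_, by
    rintro _ ⟨ε', -, rfl⟩
    rw [hΔ]
    exact max_le_max (norm_sum_sum_ite_le _ _) (norm_sum_sum_ite_le _ _)⟩
  have hN : ‖N‖ ≤ sSup (Δ '' Set.Icc 0 ε) :=
    ((le_max_left _ _).trans_eq (hΔ ε).symm).trans (le_csSup hΔ_bdd ⟨ε, ⟨hε.le, le_rfl⟩, rfl⟩)
  have hH' : (H + (h : ℂ) • R).IsHermitian := hH.add (hR.smul (Complex.conj_ofReal h))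
  have hR_split : R = N + (H * 𝓡 - 𝓡 * (H + (h : ℂ) • R)) := by
    conv_lhs => rw [eq_sum_sum_smul_vecMulVec (sum_vecMulVec_star_self_eq_one hon)
      (sum_vecMulVec_star_self_eq_one hon') R]
    simp_rw [← hb, h𝓡]
    exact sum_smul_vecMulVec_eq_nearResonantPart_add b hε hH' heig heig'
  have key := hH.norm_exp_sub_exp_le hH' (N := (h : ℂ) • N) (F := (h : ℂ) • 𝓡) (by
    conv_lhs => rw [add_sub_cancel_left, hR_split]
    simp only [smul_add, smul_sub, mul_smul_comm, smul_mul_assoc]) ht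
  rw [norm_smul, norm_smul, Complex.norm_real, Real.norm_of_nonneg hh] at key
  have hS : 0 ≤ sSup (Δ '' Set.Icc 0 ε) := (norm_nonneg _).trans hN
  have : h * ‖N‖ * t ≤ h * sSup (Δ '' Set.Icc 0 ε) * t := by gcongr
  nlinarith [mul_nonneg (mul_nonneg ht hε.le) (mul_nonneg (mul_nonneg hh hS) ht)]

/-- Tight upper bound for general error interference: with mixed eigenbases of `H`
and `H + hR`, the near-diagonal part `Δ` and gap-weighted off-diagonal part `𝓡` of `R`
control the deviation `‖exp(−i(H+hR)t) − exp(−iHt)‖`. -/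
theorem tight_general_interference_bound (n : ℕ) (hn : 0 < n)
    (H R : Matrix (Fin n) (Fin n) ℂ) (hH : H.IsHermitian) (hR : R.IsHermitian)
    (h t ε : ℝ) (hh : 0 ≤ h) (ht : 0 ≤ t) (hε : 0 < ε)
    (lam lam' : Fin n → ℝ) (ψ ψ' : Fin n → (Fin n → ℂ))
    (hon : ∀ j k, star (ψ j) ⬝ᵥ ψ k = if j = k then 1 else 0)
    (hon' : ∀ j k, star (ψ' j) ⬝ᵥ ψ' k = if j = k then 1 else 0)
    (heig : ∀ j, H.mulVec (ψ j) = (Complex.ofReal (lam j)) • ψ j)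
    (heig' : ∀ k, (H + (h : ℂ) • R).mulVec (ψ' k) = (Complex.ofReal (lam' k)) • ψ' k)
    (b : Fin n → Fin n → ℂ) (hb : ∀ j k, b j k = star (ψ j) ⬝ᵥ R.mulVec (ψ' k))
    (Δ : ℝ → ℝ)
    (hΔ : ∀ ε' : ℝ, Δ ε' =
      max ‖∑ j, ∑ k, if |lam j - lam' k| < ε' then
              b j k • Matrix.vecMulVec (ψ j) (star (ψ' k)) else 0‖
          ‖∑ j, ∑ k, if |lam j - lam' k| < ε' then
              ((Real.sign (lam j - lam' k) : ℂ) * b j k) •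
                Matrix.vecMulVec (ψ j) (star (ψ' k)) else 0‖)
    (𝓡 : Matrix (Fin n) (Fin n) ℂ)
    (h𝓡 : 𝓡 = ∑ j, ∑ k, if ε ≤ |lam j - lam' k| then
        (b j k / (Complex.ofReal (lam j) - Complex.ofReal (lam' k))) •
          Matrix.vecMulVec (ψ j) (star (ψ' k)) else 0) :
    ‖exp ((-(Complex.I * t)) • (H + (h : ℂ) • R)) - exp ((-(Complex.I * t)) • H)‖ ≤
      (1 + t * ε) * h * sSup (Δ '' Set.Icc 0 ε) * t + 2 * h * ‖𝓡‖ :=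
  tight_general_interference_bound_general n H R hH hR h t ε hh ht hε lam lam' ψ ψ' hon hon' heig
    heig' b hb Δ hΔ 𝓡 h𝓡
end

section
/- Let n be a positive integer, let H be an n×n Hermitian complex matrix with an orthonormal eigenbasis (ψ_j)_{j=1}^n and corresponding real eigenvalues λ_j, and let ψ = Σ_j a_j ψ_j ∈ ℂⁿ. Then, as T → ∞, the matrix-valued average (1/T)·∫₀ᵀ exp(−iHt)·(ψψ†)·exp(iHt) dt converges to Σ_{(j,k): λ_j = λ_k} a_j·conj(a_k)·ψ_j(ψ_k)†. In particular, if the eigenvalues λ_j are pairwise distinct, the limit equals Σ_j |a_j|²·ψ_j(ψ_j)†. -/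
/-!
Expand `v` in the eigenbasis. Conjugating the rank-one piece `ψ_j ψ_k†` by `exp(∓iHt)` multiplies
it by the phase `exp(i(λ_k - λ_j)t)`: `ψ_j` is a right eigenvector of `exp(-iHt)`, and since `H`
is Hermitian, `ψ_k†` is a left eigenvector of `exp(iHt)`. The time average of `exp(iωt)` over
`[0, T]` is `1` for `ω = 0` and `O(1 / (|ω| T))` otherwise, so exactly the pairs with
`λ_j = λ_k` survive.
-/

open scoped Matrix.Norms.L2Operator
open NormedSpace Matrix Finset Filter

namespace Matrix

theorem vecMulVec_sum_sum {R ι κ l n : Type*} [NonUnitalNonAssocSemiring R] (s : Finset ι)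
    (t : Finset κ) (x : ι → l → R) (y : κ → n → R) :
    vecMulVec (∑ i ∈ s, x i) (∑ j ∈ t, y j) = ∑ i ∈ s, ∑ j ∈ t, vecMulVec (x i) (y j) := by
  ext
  simp only [vecMulVec_apply, Finset.sum_apply, Matrix.sum_apply, Finset.sum_mul_sum]

variable {𝕂 m : Type*} [RCLike 𝕂] [Fintype m]

theorem exp_mulVec_of_mulVec_eq_smul [DecidableEq m] {M : Matrix m m 𝕂} {x : m → 𝕂} {μ : 𝕂}
    (h : M *ᵥ x = μ • x) : exp M *ᵥ x = exp μ • x := by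
  have hpow (k : ℕ) : M ^ k *ᵥ x = μ ^ k • x := by
    induction k with
    | zero => simp
    | succ k ih => rw [pow_succ', ← mulVec_mulVec, ih, mulVec_smul, h, smul_smul, pow_succ]
  have hM := (exp_series_hasSum_exp' (𝕂 := 𝕂) M).map (mulVec.addMonoidHomLeft x)
    (continuous_id.matrix_mulVec continuous_const)
  have hμ := (exp_series_hasSum_exp' (𝕂 := 𝕂) μ).smul_const x
  refine hM.unique (hμ.congr_fun fun k => ?_)
  show ((k.factorial : 𝕂)⁻¹ • M ^ k) *ᵥ x = _
  rw [smul_mulVec, hpow, smul_smul, smul_eq_mul]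

theorem vecMul_exp_of_vecMul_eq_smul [DecidableEq m] {M : Matrix m m 𝕂} {x : m → 𝕂} {μ : 𝕂}
    (h : x ᵥ* M = μ • x) : x ᵥ* exp M = exp μ • x := by
  rw [← mulVec_transpose, ← exp_transpose, exp_mulVec_of_mulVec_eq_smul]
  rwa [mulVec_transpose]

theorem IsHermitian.star_vecMul_eq_smul {H : Matrix m m 𝕂} (hH : H.IsHermitian) {x : m → 𝕂}
    {r : ℝ} (h : H *ᵥ x = (r : 𝕂) • x) : star x ᵥ* H = (r : 𝕂) • star x := by
  rw [← hH.eq, ← star_mulVec, h, star_smul, RCLike.star_def, RCLike.conj_ofReal]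

theorem exp_neg_smul_mul_vecMulVec_mul_exp_smul [DecidableEq m] {H : Matrix m m 𝕂}
    {x w : m → 𝕂} {μ ν : 𝕂} (hx : H *ᵥ x = μ • x) (hw : w ᵥ* H = ν • w) (s : 𝕂) :
    exp ((-s) • H) * vecMulVec x w * exp (s • H) = exp (s * (ν - μ)) • vecMulVec x w := by
  have hx' : ((-s) • H) *ᵥ x = (-s * μ) • x := by rw [smul_mulVec, hx, smul_smul]
  have hw' : w ᵥ* (s • H) = (s * ν) • w := by rw [vecMul_smul, hw, smul_smul]
  rw [mul_vecMulVec, vecMulVec_mul, exp_mulVec_of_mulVec_eq_smul hx',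
    vecMul_exp_of_vecMul_eq_smul hw', smul_vecMulVec, vecMulVec_smul, smul_smul, ← exp_add]
  ring_nf

end Matrix

open Complex in
theorem norm_integral_cexp_mul_I_le {ω : ℝ} (hω : ω ≠ 0) (T : ℝ) :
    ‖∫ t in (0 : ℝ)..T, cexp (I * ω * t)‖ ≤ 2 / |ω| := by
  have hIω : I * ω ≠ 0 := mul_ne_zero I_ne_zero (ofReal_ne_zero.mpr hω)
  rw [integral_exp_mul_complex hIω, ofReal_zero, mul_zero, Complex.exp_zero, norm_div,
    norm_mul, norm_I, one_mul, norm_real, Real.norm_eq_abs]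
  gcongr
  calc ‖cexp (I * ω * T) - 1‖ ≤ ‖cexp (I * ω * T)‖ + ‖(1 : ℂ)‖ := norm_sub_le _ _
    _ = 2 := by
      rw [mul_assoc, ← ofReal_mul, norm_exp_I_mul_ofReal, norm_one]
      norm_num

open Complex in
theorem tendsto_average_cexp_mul_I (ω : ℝ) :
    Tendsto (fun T : ℝ => (1 / T) • ∫ t in (0 : ℝ)..T, cexp (I * ω * t)) atTop
      (nhds (if ω = 0 then 1 else 0)) := by
  split_ifs with hω
  · refine tendsto_const_nhds.congr' ?_
    filter_upwards [eventually_ne_atTop 0] with T hT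
    simp [hω, hT]
  · exact (tendsto_const_nhds.div_atTop tendsto_id).zero_smul_isBoundedUnder_le
      (isBoundedUnder_of ⟨2 / |ω|, norm_integral_cexp_mul_I_le hω⟩)

open Complex in
theorem tendsto_average_sum_cexp_smul {ι E : Type*} [NormedAddCommGroup E] [NormedSpace ℂ E]
    [CompleteSpace E] (s : Finset ι) (ω : ι → ℝ) (B : ι → E) :
    Tendsto (fun T : ℝ => (1 / T) • ∫ t in (0 : ℝ)..T, ∑ i ∈ s, cexp (I * ω i * t) • B i)
      atTop (nhds (∑ i ∈ s, if ω i = 0 then B i else 0)) := by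
  have hintegral (T : ℝ) : ∫ t in (0 : ℝ)..T, ∑ i ∈ s, cexp (I * ω i * t) • B i
      = ∑ i ∈ s, (∫ t in (0 : ℝ)..T, cexp (I * ω i * t)) • B i := by
    rw [intervalIntegral.integral_finsetSum fun i _ =>
      (by fun_prop : Continuous fun t : ℝ => cexp (I * ω i * t) • B i).intervalIntegrable _ _]
    simp_rw [intervalIntegral.integral_smul_const]
  simp_rw [hintegral, Finset.smul_sum, ← smul_assoc]
  refine tendsto_finsetSum _ fun i _ => ?_
  simpa only [ite_smul, one_smul, zero_smul] using
    (tendsto_average_cexp_mul_I (ω i)).smul_const (B i)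

theorem dephasing_time_average_general (n : ℕ)
    (H : Matrix (Fin n) (Fin n) ℂ) (hH : H.IsHermitian)
    (lam : Fin n → ℝ) (ψ : Fin n → (Fin n → ℂ))
    (heig : ∀ j, H.mulVec (ψ j) = (Complex.ofReal (lam j)) • ψ j)
    (a : Fin n → ℂ) (v : Fin n → ℂ) (hv : v = ∑ j, a j • ψ j) :
    Tendsto (fun T : ℝ => (1 / T) •
        ∫ t in (0:ℝ)..T, exp ((-(Complex.I * t)) • H) *
          Matrix.vecMulVec v (star v) * exp ((Complex.I * t) • H))
      atTop
      (nhds (∑ j, ∑ k, if lam j = lam k then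
        (a j * starRingEnd ℂ (a k)) • Matrix.vecMulVec (ψ j) (star (ψ k)) else 0)) ∧
    (Function.Injective lam →
      Tendsto (fun T : ℝ => (1 / T) •
          ∫ t in (0:ℝ)..T, exp ((-(Complex.I * t)) • H) *
            Matrix.vecMulVec v (star v) * exp ((Complex.I * t) • H))
        atTop
        (nhds (∑ j, Complex.ofReal (‖a j‖ ^ 2) •
          Matrix.vecMulVec (ψ j) (star (ψ j))))) := by
  set B : Fin n × Fin n → Matrix (Fin n) (Fin n) ℂ :=
    fun p => (a p.1 * starRingEnd ℂ (a p.2)) • vecMulVec (ψ p.1) (star (ψ p.2))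
  have hexpand : vecMulVec v (star v) = ∑ p, B p := by
    simp only [hv, star_sum, star_smul, vecMulVec_sum_sum, smul_vecMulVec, vecMulVec_smul,
      smul_smul, Fintype.sum_prod_type, B, RCLike.star_def, mul_comm]
  have hevolve (t : ℝ) :
      exp ((-(Complex.I * t)) • H) * vecMulVec v (star v) * exp ((Complex.I * t) • H)
      = ∑ p, Complex.exp (Complex.I * (lam p.2 - lam p.1 : ℝ) * t) • B p := by
    rw [hexpand, Finset.mul_sum, Finset.sum_mul]
    refine Finset.sum_congr rfl fun p _ => ?_
    rw [mul_smul_comm, smul_mul_assoc, exp_neg_smul_mul_vecMulVec_mul_exp_smul (heig p.1)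
      (hH.star_vecMul_eq_smul (heig p.2)), ← Complex.exp_eq_exp_ℂ, smul_comm]
    congr 2
    push_cast
    exact mul_right_comm _ _ _
  have hblock : (∑ p, if lam p.2 - lam p.1 = 0 then B p else 0)
      = ∑ j, ∑ k, if lam j = lam k then (a j * starRingEnd ℂ (a k)) • vecMulVec (ψ j) (star (ψ k))
          else 0 := by
    simp only [Fintype.sum_prod_type, sub_eq_zero, eq_comm, B]
  have hlim := tendsto_average_sum_cexp_smul univ (fun p => lam p.2 - lam p.1) B
  simp only [← hevolve, hblock] at hlim
  refine ⟨hlim, fun hinj => ?_⟩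
  have hdiag : (∑ j, ∑ k, if lam j = lam k then
      (a j * starRingEnd ℂ (a k)) • vecMulVec (ψ j) (star (ψ k)) else 0)
      = ∑ j, ((‖a j‖ ^ 2 : ℝ) : ℂ) • vecMulVec (ψ j) (star (ψ j)) := by
    simp [hinj.eq_iff, Complex.mul_conj, Complex.normSq_eq_norm_sq]
  rwa [hdiag] at hlim

/-- Dephasing (time-averaging) identity: the long-time average of
`exp(−iHt)(ψψ†)exp(iHt)` converges to the block-diagonal part of `ψψ†` in the
eigenbasis of `H`; if the eigenvalues are pairwise distinct, it converges to
`Σ_j |a_j|² ψ_jψ_j†`. -/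
theorem dephasing_time_average (n : ℕ) (hn : 0 < n)
    (H : Matrix (Fin n) (Fin n) ℂ) (hH : H.IsHermitian)
    (lam : Fin n → ℝ) (ψ : Fin n → (Fin n → ℂ))
    (hon : ∀ j k, star (ψ j) ⬝ᵥ ψ k = if j = k then 1 else 0)
    (heig : ∀ j, H.mulVec (ψ j) = (Complex.ofReal (lam j)) • ψ j)
    (a : Fin n → ℂ) (v : Fin n → ℂ) (hv : v = ∑ j, a j • ψ j) :
    Tendsto (fun T : ℝ => (1 / T) •
        ∫ t in (0:ℝ)..T, exp ((-(Complex.I * t)) • H) *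
          Matrix.vecMulVec v (star v) * exp ((Complex.I * t) • H))
      atTop
      (nhds (∑ j, ∑ k, if lam j = lam k then
        (a j * starRingEnd ℂ (a k)) • Matrix.vecMulVec (ψ j) (star (ψ k)) else 0)) ∧
    (Function.Injective lam →
      Tendsto (fun T : ℝ => (1 / T) •
          ∫ t in (0:ℝ)..T, exp ((-(Complex.I * t)) • H) *
            Matrix.vecMulVec v (star v) * exp ((Complex.I * t) • H))
        atTop
        (nhds (∑ j, Complex.ofReal (‖a j‖ ^ 2) •
          Matrix.vecMulVec (ψ j) (star (ψ j))))) :=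
  dephasing_time_average_general n H hH lam ψ heig a v hv
end
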